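/- arXiv:1708.01442 — 2 statements merged into one kernel-verified Lean document; each statement's English description precedes it below -/
import Mathlib

section
/- Let n ≥ 1, let e, e_f, σ ∈ ℝⁿ with e_f ≠ 0, let G, Ω be real symmetric positive definite n×n matrices, and let s ≥ 0. Let Θ* = (θ₀*, θ₁*, θ₂*) with θᵢ* ≥ 0 and suppose ‖σ‖ ≤ θ₀* + θ₁* s + θ₂* s². Let Θ̂ = (θ̂₀, θ̂₁, θ̂₂) ∈ ℝ³ and γ ∈ ℝ be arbitrary, write Y = (1, s, s²), and set ρ̂ = YᵀΘ̂ + γ. Then −e_fᵀ G e_f − eᵀ Ω e + e_fᵀ( −ρ̂ e_f/‖e_f‖ + σ ) + Yᵀ(Θ̂ − Θ*) ‖e_f‖ + γ ‖e_f‖ ≤ −λ_min(G)‖e_f‖² − λ_min(Ω)‖e‖². -/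
noncomputable def matVec {n : ℕ} (A : Matrix (Fin n) (Fin n) ℝ)
    (x : EuclideanSpace ℝ (Fin n)) : EuclideanSpace ℝ (Fin n) :=
  Matrix.toEuclideanCLM (𝕜 := ℝ) A x

/-- Real inner product `xᵀ y` on Euclidean space. -/
noncomputable def dotE {n : ℕ} (x y : EuclideanSpace ℝ (Fin n)) : ℝ := inner ℝ x y

/-- Minimum eigenvalue of a Hermitian (real symmetric) matrix. -/
noncomputable def lamMin {n : ℕ} (A : Matrix (Fin n) (Fin n) ℝ) (hA : A.IsHermitian) : ℝ :=
  ⨅ i, hA.eigenvalues i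

/-!
The switching term `-(ρ / ‖e_f‖) e_f` contributes `-ρ ‖e_f‖` to `e_fᵀ(…)`, while the disturbance
contributes at most `‖σ‖ ‖e_f‖ ≤ (YᵀΘ*) ‖e_f‖`. With `ρ = YᵀΘ̂ + γ`, the adaptation terms
`Yᵀ(Θ̂ − Θ*) ‖e_f‖ + γ ‖e_f‖` cancel the estimated gains exactly, leaving
`(‖σ‖ − YᵀΘ*) ‖e_f‖ ≤ 0`. The quadratic terms are bounded by the Rayleigh inequality
`λ_min(A) ‖x‖² ≤ xᵀ A x`, obtained by expanding `x` in an orthonormal eigenbasis of `A`.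
-/

open scoped RealInnerProductSpace

namespace Matrix.IsHermitian

variable {ι : Type*} [Fintype ι] [DecidableEq ι] {A : Matrix ι ι ℝ}

theorem toEuclideanLin_eigenvectorBasis (hA : A.IsHermitian) (i : ι) :
    toEuclideanLin A (hA.eigenvectorBasis i) = hA.eigenvalues i • hA.eigenvectorBasis i := by
  ext1
  simpa using congr_fun (hA.mulVec_eigenvectorBasis i) _

theorem inner_toEuclideanLin_self_eq_sum (hA : A.IsHermitian) (x : EuclideanSpace ℝ ι) :
    ⟪x, toEuclideanLin A x⟫ = ∑ i, hA.eigenvalues i * ⟪hA.eigenvectorBasis i, x⟫ ^ 2 := by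
  set b := hA.eigenvectorBasis
  rw [← b.sum_inner_mul_inner]
  refine Finset.sum_congr rfl fun i _ => ?_
  rw [← isSymmetric_toEuclideanLin_iff.2 hA, toEuclideanLin_eigenvectorBasis, real_inner_smul_left,
    real_inner_comm x]
  ring

theorem iInf_eigenvalues_mul_norm_sq_le (hA : A.IsHermitian) (x : EuclideanSpace ℝ ι) :
    (⨅ i, hA.eigenvalues i) * ‖x‖ ^ 2 ≤ ⟪x, toEuclideanLin A x⟫ := by
  rw [hA.inner_toEuclideanLin_self_eq_sum, ← hA.eigenvectorBasis.sum_sq_inner_right,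
    Finset.mul_sum]
  gcongr with i
  exact ciInf_le (Finite.bddBelow_range _) i

end Matrix.IsHermitian

theorem lamMin_mul_norm_sq_le_dotE_matVec {n : ℕ} (A : Matrix (Fin n) (Fin n) ℝ)
    (hA : A.IsHermitian) (x : EuclideanSpace ℝ (Fin n)) :
    lamMin A hA * ‖x‖ ^ 2 ≤ dotE x (matVec A x) :=
  hA.iInf_eigenvalues_mul_norm_sq_le x

theorem inner_neg_div_norm_smul_add_le {E : Type*} [NormedAddCommGroup E]
    [InnerProductSpace ℝ E] (v σ : E) (ρ : ℝ) :
    ⟪v, -((ρ / ‖v‖) • v) + σ⟫ ≤ (‖σ‖ - ρ) * ‖v‖ := by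
  have hswitch : ⟪v, (ρ / ‖v‖) • v⟫ = ρ * ‖v‖ := by
    rcases (norm_nonneg v).eq_or_lt with hv | hv
    · simp [← hv]
    · rw [real_inner_smul_right, real_inner_self_eq_norm_sq]
      field_simp
  rw [inner_add_right, inner_neg_right, hswitch]
  linarith [real_inner_le_norm v σ]

theorem case1_increasing_gains_bound_general {n : ℕ}
    (e ef σ : EuclideanSpace ℝ (Fin n))
    (G Ω : Matrix (Fin n) (Fin n) ℝ) (hG : G.PosDef) (hΩ : Ω.PosDef)
    (s : ℝ)
    (θ0s θ1s θ2s : ℝ)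
    (hσ : ‖σ‖ ≤ θ0s + θ1s * s + θ2s * s ^ 2)
    (θ0 θ1 θ2 γ : ℝ)
    (ρ : ℝ) (hρ : ρ = (θ0 + θ1 * s + θ2 * s ^ 2) + γ) :
    -dotE ef (matVec G ef) - dotE e (matVec Ω e)
      + dotE ef (-((ρ / ‖ef‖) • ef) + σ)
      + ((θ0 - θ0s) + (θ1 - θ1s) * s + (θ2 - θ2s) * s ^ 2) * ‖ef‖
      + γ * ‖ef‖ ≤
      -(lamMin G hG.isHermitian) * ‖ef‖ ^ 2 - lamMin Ω hΩ.isHermitian * ‖e‖ ^ 2 := by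
  have hG_quad := lamMin_mul_norm_sq_le_dotE_matVec G hG.isHermitian ef
  have hΩ_quad := lamMin_mul_norm_sq_le_dotE_matVec Ω hΩ.isHermitian e
  have hswitch : dotE ef (-((ρ / ‖ef‖) • ef) + σ) ≤ (‖σ‖ - ρ) * ‖ef‖ :=
    inner_neg_div_norm_smul_add_le ef σ ρ
  have hdisturbance := mul_le_mul_of_nonneg_right hσ (norm_nonneg ef)
  subst hρ
  linarith

theorem case1_increasing_gains_bound {n : ℕ} (hn : 1 ≤ n)
    (e ef σ : EuclideanSpace ℝ (Fin n)) (hef : ef ≠ 0)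
    (G Ω : Matrix (Fin n) (Fin n) ℝ) (hG : G.PosDef) (hΩ : Ω.PosDef)
    (s : ℝ) (hs : 0 ≤ s)
    (θ0s θ1s θ2s : ℝ) (hθ0s : 0 ≤ θ0s) (hθ1s : 0 ≤ θ1s) (hθ2s : 0 ≤ θ2s)
    (hσ : ‖σ‖ ≤ θ0s + θ1s * s + θ2s * s ^ 2)
    (θ0 θ1 θ2 γ : ℝ)
    (ρ : ℝ) (hρ : ρ = (θ0 + θ1 * s + θ2 * s ^ 2) + γ) :
    -dotE ef (matVec G ef) - dotE e (matVec Ω e)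
      + dotE ef (-((ρ / ‖ef‖) • ef) + σ)
      + ((θ0 - θ0s) + (θ1 - θ1s) * s + (θ2 - θ2s) * s ^ 2) * ‖ef‖
      + γ * ‖ef‖ ≤
      -(lamMin G hG.isHermitian) * ‖ef‖ ^ 2 - lamMin Ω hΩ.isHermitian * ‖e‖ ^ 2 :=
  case1_increasing_gains_bound_general e ef σ G Ω hG hΩ s θ0s θ1s θ2s hσ θ0 θ1 θ2 γ ρ hρ
end

section
/- Let n ≥ 1, let e, e_f, σ ∈ ℝⁿ with e_f ≠ 0, let G, Ω be real symmetric positive definite n×n matrices, and let s ≥ 0 and g > 0 satisfy ‖e_f‖ ≤ g s. Let θ₀*, θ₁*, θ₂* ≥ 0 with ‖σ‖ ≤ θ₀* + θ₁* s + θ₂* s², let θ̂₀, θ̂₁, θ̂₂ ≥ 0, let ς > 0 and γ ≥ β > 0, write Y = (1, s, s²), Θ̂ = (θ̂₀, θ̂₁, θ̂₂), Θ* = (θ₀*, θ₁*, θ₂*), and set ρ̂ = YᵀΘ̂ + γ. Then −e_fᵀ G e_f − eᵀ Ω e + e_fᵀ( −ρ̂ e_f/‖e_f‖ + σ ) − Yᵀ(Θ̂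 − Θ*) ‖e_f‖ − ς γ s⁴ ≤ −λ_min(G)‖e_f‖² − λ_min(Ω)‖e‖² − ς β s⁴ + 2 g ( θ₀* s + θ₁* s² + θ₂* s³ ). -/
/-! Each term is bounded separately. The quadratic forms are bounded below by `λ_min ‖x‖²` by
expanding `x` in an orthonormal eigenbasis `(bᵢ)`: `xᵀ A x = ∑ λᵢ ⟪bᵢ, x⟫²` and
`‖x‖² = ∑ ⟪bᵢ, x⟫²`. The switching term contributes `-ρ̂ ‖e_f‖` (also at `e_f = 0`, where the
division is junk), which together with `-YᵀΘ̂ ‖e_f‖` is nonpositive; Cauchy–Schwarz and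
`‖e_f‖ ≤ g s` turn the `σ` and `Θ*` terms into `2 g s YᵀΘ*`, and `γ ≥ β` handles the quartic. -/

section Rayleigh

variable {n : ℕ} {A : Matrix (Fin n) (Fin n) ℝ} (hA : A.IsHermitian)

theorem matVec_eigenvectorBasis (i : Fin n) :
    matVec A (hA.eigenvectorBasis i) = hA.eigenvalues i • hA.eigenvectorBasis i :=
  PiLp.ext fun j ↦ congrFun (hA.mulVec_eigenvectorBasis i) j

theorem dotE_matVec_eq_sum_eigenvalues_mul_sq (x : EuclideanSpace ℝ (Fin n)) :
    dotE x (matVec A x) = ∑ i, hA.eigenvalues i * inner ℝ (hA.eigenvectorBasis i) x ^ 2 := by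
  set b := hA.eigenvectorBasis
  have hAx : matVec A x = ∑ i, (inner ℝ (b i) x * hA.eigenvalues i) • b i := by
    conv_lhs => rw [← b.sum_repr' x]
    simp only [matVec, map_sum, map_smul]
    refine Finset.sum_congr rfl fun i _ ↦ ?_
    rw [← smul_smul]
    exact congrArg _ (matVec_eigenvectorBasis hA i)
  rw [dotE, hAx, inner_sum]
  refine Finset.sum_congr rfl fun i _ ↦ ?_
  rw [real_inner_smul_right, real_inner_comm]
  ring

theorem lamMin_mul_sq_norm_le_dotE_matVec (x : EuclideanSpace ℝ (Fin n)) :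
    lamMin A hA * ‖x‖ ^ 2 ≤ dotE x (matVec A x) := by
  rw [dotE_matVec_eq_sum_eigenvalues_mul_sq hA, ← hA.eigenvectorBasis.sum_sq_inner_right x,
    Finset.mul_sum]
  exact Finset.sum_le_sum fun i _ ↦
    mul_le_mul_of_nonneg_right (ciInf_le (Finite.bddBelow_range _) i) (sq_nonneg _)

end Rayleigh

theorem dotE_div_norm_smul_self {n : ℕ} (c : ℝ) (x : EuclideanSpace ℝ (Fin n)) :
    dotE x ((c / ‖x‖) • x) = c * ‖x‖ := by
  rw [dotE, real_inner_smul_right, real_inner_self_eq_norm_sq]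
  rcases eq_or_ne ‖x‖ 0 with hx | hx
  · simp [hx]
  · field_simp

theorem case2_decreasing_gains_bound_general {n : ℕ}
    (e ef σ : EuclideanSpace ℝ (Fin n))
    (G Ω : Matrix (Fin n) (Fin n) ℝ) (hG : G.PosDef) (hΩ : Ω.PosDef)
    (s g : ℝ) (hs : 0 ≤ s) (hefs : ‖ef‖ ≤ g * s)
    (θ0s θ1s θ2s : ℝ) (hθ0s : 0 ≤ θ0s) (hθ1s : 0 ≤ θ1s) (hθ2s : 0 ≤ θ2s)
    (hσ : ‖σ‖ ≤ θ0s + θ1s * s + θ2s * s ^ 2)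
    (θ0 θ1 θ2 : ℝ) (hθ0 : 0 ≤ θ0) (hθ1 : 0 ≤ θ1) (hθ2 : 0 ≤ θ2)
    (ς γ β : ℝ) (hς : 0 < ς) (hβ : 0 < β) (hγ : β ≤ γ)
    (ρ : ℝ) (hρ : ρ = (θ0 + θ1 * s + θ2 * s ^ 2) + γ) :
    -dotE ef (matVec G ef) - dotE e (matVec Ω e)
      + dotE ef (-((ρ / ‖ef‖) • ef) + σ)
      - ((θ0 - θ0s) + (θ1 - θ1s) * s + (θ2 - θ2s) * s ^ 2) * ‖ef‖
      - ς * γ * s ^ 4 ≤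
      -(lamMin G hG.isHermitian) * ‖ef‖ ^ 2 - lamMin Ω hΩ.isHermitian * ‖e‖ ^ 2
        - ς * β * s ^ 4 + 2 * g * (θ0s * s + θ1s * s ^ 2 + θ2s * s ^ 3) := by
  set T := θ0 + θ1 * s + θ2 * s ^ 2
  set S := θ0s + θ1s * s + θ2s * s ^ 2
  have hGef := lamMin_mul_sq_norm_le_dotE_matVec hG.isHermitian ef
  have hΩe := lamMin_mul_sq_norm_le_dotE_matVec hΩ.isHermitian e
  have hdot : dotE ef (-((ρ / ‖ef‖) • ef) + σ) = -(ρ * ‖ef‖) + dotE ef σ := by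
    rw [← dotE_div_norm_smul_self ρ ef]
    simp only [dotE, inner_add_right, inner_neg_right]
  have hσef : dotE ef σ ≤ S * ‖ef‖ := (real_inner_le_norm ef σ).trans <| by
    rw [mul_comm S]; exact mul_le_mul_of_nonneg_left hσ (norm_nonneg ef)
  have hSef : S * ‖ef‖ ≤ S * (g * s) := mul_le_mul_of_nonneg_left hefs (by positivity)
  have hTef : 0 ≤ T * ‖ef‖ := by positivity
  have hγef : 0 ≤ γ * ‖ef‖ := mul_nonneg (hβ.le.trans hγ) (norm_nonneg ef)
  have hquartic : ς * β * s ^ 4 ≤ ς * γ * s ^ 4 := by gcongr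
  rw [hdot, hρ]
  linear_combination hGef + hΩe + hσef + 2 * hSef + 2 * hTef + hγef + hquartic

theorem case2_decreasing_gains_bound {n : ℕ} (hn : 1 ≤ n)
    (e ef σ : EuclideanSpace ℝ (Fin n)) (hef : ef ≠ 0)
    (G Ω : Matrix (Fin n) (Fin n) ℝ) (hG : G.PosDef) (hΩ : Ω.PosDef)
    (s g : ℝ) (hs : 0 ≤ s) (hg : 0 < g) (hefs : ‖ef‖ ≤ g * s)
    (θ0s θ1s θ2s : ℝ) (hθ0s : 0 ≤ θ0s) (hθ1s : 0 ≤ θ1s) (hθ2s : 0 ≤ θ2s)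
    (hσ : ‖σ‖ ≤ θ0s + θ1s * s + θ2s * s ^ 2)
    (θ0 θ1 θ2 : ℝ) (hθ0 : 0 ≤ θ0) (hθ1 : 0 ≤ θ1) (hθ2 : 0 ≤ θ2)
    (ς γ β : ℝ) (hς : 0 < ς) (hβ : 0 < β) (hγ : β ≤ γ)
    (ρ : ℝ) (hρ : ρ = (θ0 + θ1 * s + θ2 * s ^ 2) + γ) :
    -dotE ef (matVec G ef) - dotE e (matVec Ω e)
      + dotE ef (-((ρ / ‖ef‖) • ef) + σ)
      - ((θ0 - θ0s) + (θ1 - θ1s) * s + (θ2 - θ2s) * s ^ 2) * ‖ef‖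
      - ς * γ * s ^ 4 ≤
      -(lamMin G hG.isHermitian) * ‖ef‖ ^ 2 - lamMin Ω hΩ.isHermitian * ‖e‖ ^ 2
        - ς * β * s ^ 4 + 2 * g * (θ0s * s + θ1s * s ^ 2 + θ2s * s ^ 3) :=
  case2_decreasing_gains_bound_general e ef σ G Ω hG hΩ s g hs hefs θ0s θ1s θ2s hθ0s hθ1s hθ2s hσ θ0
    θ1 θ2 hθ0 hθ1 hθ2 ς γ β hς hβ hγ ρ hρ
end
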